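/- arXiv:2008.03887 — 3 statements merged into one kernel-verified Lean document; each statement's English description precedes it below -/
import Mathlib

section
/- For any graphs G and H without isolated vertices, Γ(G × H) ≥ Γ(G)·Γ(H), where Γ denotes the upper domination number. -/
set_option linter.unusedVariables false
set_option linter.unnecessarySeqFocus false

open SimpleGraph

variable {V : Type*} {W : Type*}

/-- The direct (tensor) product of two simple graphs. -/
def SimpleGraph.tensor (G : SimpleGraph V) (H : SimpleGraph W) : SimpleGraph (V × W) where
  Adj p q := G.Adj p.1 q.1 ∧ H.Adj p.2 q.2
  symm := ⟨fun p q h => ⟨h.1.symm, h.2.symm⟩⟩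
  loopless := ⟨fun p h => G.irrefl h.1⟩

/-- A dominating set: every vertex is in `D` or adjacent to a member of `D`. -/
def SimpleGraph.Dominating (G : SimpleGraph V) (D : Set V) : Prop :=
  ∀ v, ∃ u ∈ D, u = v ∨ G.Adj u v

/-- The domination number. -/
noncomputable def SimpleGraph.domNum (G : SimpleGraph V) : ℕ :=
  sInf {n | ∃ D : Set V, G.Dominating D ∧ D.ncard = n}

/-- A total dominating set. -/
def SimpleGraph.TotalDominating (G : SimpleGraph V) (D : Set V) : Prop :=
  ∀ v, ∃ u ∈ D, G.Adj u v

/-- The total domination number. -/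
noncomputable def SimpleGraph.totalDomNum (G : SimpleGraph V) : ℕ :=
  sInf {n | ∃ D : Set V, G.TotalDominating D ∧ D.ncard = n}

/-- A paired dominating set: dominating and the induced subgraph has a perfect matching. -/
def SimpleGraph.PairedDominating (G : SimpleGraph V) (D : Set V) : Prop :=
  G.Dominating D ∧ ∃ M : (G.induce D).Subgraph, M.IsPerfectMatching

/-- The paired domination number. -/
noncomputable def SimpleGraph.pairedDomNum (G : SimpleGraph V) : ℕ :=
  sInf {n | ∃ D : Set V, G.PairedDominating D ∧ D.ncard = n}

/-- A 3-packing: vertices pairwise at distance greater than 3. -/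
def SimpleGraph.Packing3 (G : SimpleGraph V) (P : Set V) : Prop :=
  P.Pairwise fun u v => ¬G.Reachable u v ∨ 3 < G.dist u v

/-- The 3-packing number. -/
noncomputable def SimpleGraph.packNum3 (G : SimpleGraph V) : ℕ :=
  sSup {n | ∃ P : Set V, G.Packing3 P ∧ P.ncard = n}

/-- A minimal dominating set. -/
def SimpleGraph.MinimalDominating (G : SimpleGraph V) (D : Set V) : Prop :=
  G.Dominating D ∧ ∀ D' ⊆ D, G.Dominating D' → D' = D

/-- The upper domination number. -/
noncomputable def SimpleGraph.upperDomNum (G : SimpleGraph V) : ℕ :=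
  sSup {n | ∃ D : Set V, G.MinimalDominating D ∧ D.ncard = n}

/-- `G` has no isolated vertices. -/
def SimpleGraph.NoIsolated (G : SimpleGraph V) : Prop := ∀ v, ∃ u, G.Adj u v

/-- Direct product of complete graphs `K_{n 0} × ... × K_{n (t-1)}`:
tuples adjacent iff they differ in every coordinate. -/
def prodCompleteGraphs {t : ℕ} (n : Fin t → ℕ) : SimpleGraph (∀ i, Fin (n i)) where
  Adj a b := a ≠ b ∧ ∀ i, a i ≠ b i
  symm := ⟨fun a b h => ⟨h.1.symm, fun i => (h.2 i).symm⟩⟩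
  loopless := ⟨fun a h => h.1 rfl⟩

/-- `G` together with a new pendant vertex (`none`) attached to `v`. -/
def addPendant (G : SimpleGraph V) (v : V) : SimpleGraph (Option V) where
  Adj x y :=
    match x, y with
    | some a, some b => G.Adj a b
    | some a, none => a = v
    | none, some b => b = v
    | none, none => False
  symm := by
    constructor
    rintro (_ | a) (_ | b) h <;> simp_all [SimpleGraph.adj_comm]
  loopless := by
    constructor
    rintro (_ | a) h <;> simp_all

/-- `G` with a path on `ℓ` vertices appended to vertex `u` via a bridge. -/
def appendPath (G : SimpleGraph V) (u : V) (ℓ : ℕ) : SimpleGraph (V ⊕ Fin ℓ) where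
  Adj x y :=
    match x, y with
    | Sum.inl a, Sum.inl b => G.Adj a b
    | Sum.inl a, Sum.inr j => a = u ∧ (j : ℕ) = 0
    | Sum.inr i, Sum.inl b => b = u ∧ (i : ℕ) = 0
    | Sum.inr i, Sum.inr j => (i : ℕ) + 1 = j ∨ (j : ℕ) + 1 = i
  symm := by
    constructor
    rintro (a | i) (b | j) h <;> simp_all [SimpleGraph.adj_comm] <;> tauto
  loopless := by
    constructor
    rintro (a | i) h <;> simp_all

/-- `G` with a pendant path on two vertices `(v,1)–(v,2)` attached to each vertex `(v,0)`. -/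
def attachPaths2 (G : SimpleGraph V) : SimpleGraph (V × Fin 3) where
  Adj p q :=
    (p.2 = 0 ∧ q.2 = 0 ∧ G.Adj p.1 q.1) ∨
    (p.1 = q.1 ∧ ((p.2 = 0 ∧ q.2 = 1) ∨ (p.2 = 1 ∧ q.2 = 0) ∨
      (p.2 = 1 ∧ q.2 = 2) ∨ (p.2 = 2 ∧ q.2 = 1)))
  symm := by
    constructor
    rintro ⟨a, i⟩ ⟨b, j⟩ h <;> simp_all [SimpleGraph.adj_comm] <;> tauto
  loopless := by
    constructor
    rintro ⟨a, i⟩ h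
    rcases h with ⟨-, -, h⟩ | ⟨-, h⟩
    · exact G.irrefl h
    · rcases h with ⟨h1, h2⟩ | ⟨h1, h2⟩ | ⟨h1, h2⟩ | ⟨h1, h2⟩ <;> simp_all

/-!
Let `D₁`, `D₂` be minimal dominating sets of `G`, `H`, and let `A₁ ⊆ D₁`, `A₂ ⊆ D₂` be their
vertices without a neighbour inside the set. Every `u ∈ D₁` has a private neighbour `π₁ u`, which
is `u` itself when `u ∈ A₁` and lies outside `D₁` otherwise; likewise for `D₂`. The set
`S = A₁ × W ∪ D₁ × D₂ ∪ V × A₂` dominates `G × H`, and for `(u, v) ∈ D₁ × D₂` the vertex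
`(π₁ u, π₂ v)` is a private neighbour, with respect to `S`, of `(π₁ u, π₂ v)` itself if `u ∈ A₁` or
`v ∈ A₂`, and of `(u, v)` otherwise. These representatives are pairwise distinct, since a first
coordinate `u` or `π₁ u` determines `u`, so all `|D₁| |D₂|` of them survive in any minimal
dominating set of `G × H` obtained by shrinking `S`.
-/

namespace SimpleGraph

variable {G : SimpleGraph V} {H : SimpleGraph W}

lemma dominating_univ (G : SimpleGraph V) : G.Dominating Set.univ :=
  fun v => ⟨v, Set.mem_univ v, Or.inl rfl⟩

def IsPrivateNeighbor (G : SimpleGraph V) (D : Set V) (u q : V) : Prop :=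
  (u = q ∨ G.Adj u q) ∧ ∀ w ∈ D, (w = q ∨ G.Adj w q) → w = u

lemma IsPrivateNeighbor.mem_of_dominating {S D : Set V} {u q : V}
    (hq : G.IsPrivateNeighbor S u q) (hD : G.Dominating D) (hDS : D ⊆ S) : u ∈ D := by
  obtain ⟨w, hw, hwq⟩ := hD q
  exact hq.2 w (hDS hw) hwq ▸ hw

lemma IsPrivateNeighbor.eq_of_eq_or_eq {D : Set V} {u u' q q' x : V}
    (hq : G.IsPrivateNeighbor D u q) (hq' : G.IsPrivateNeighbor D u' q')
    (hu : u ∈ D) (hu' : u' ∈ D) (hx : x = u ∨ x = q) (hx' : x = u' ∨ x = q') : u = u' := by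
  rcases hx with rfl | rfl <;> rcases hx' with h | h
  · exact h
  · exact hq'.2 x hu (Or.inl h)
  · exact (hq.2 u' hu' (Or.inl h.symm)).symm
  · exact (hq.2 u' hu' (h ▸ hq'.1)).symm

lemma Dominating.exists_minimalDominating_superset [Finite V] {S I : Set V}
    (hS : G.Dominating S) (hIS : I ⊆ S) (hI : ∀ x ∈ I, ∃ q, G.IsPrivateNeighbor S x q) :
    ∃ D, G.MinimalDominating D ∧ I ⊆ D := by
  obtain ⟨D, hDS, hD⟩ := exists_minimal_le_of_wellFoundedLT G.Dominating S hS
  refine ⟨D, ⟨hD.1, fun D' hD'D hD' => (hD.2 hD' hD'D).antisymm' hD'D⟩, fun x hx => ?_⟩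
  obtain ⟨q, hq⟩ := hI x hx
  exact hq.mem_of_dominating hD.1 hDS

lemma exists_minimalDominating [Finite V] (G : SimpleGraph V) : ∃ D, G.MinimalDominating D := by
  obtain ⟨D, hD, -⟩ := G.dominating_univ.exists_minimalDominating_superset
    (Set.empty_subset _) (I := ∅) (by simp)
  exact ⟨D, hD⟩

lemma upperDomNum_bddAbove [Finite V] (G : SimpleGraph V) :
    BddAbove {n | ∃ D : Set V, G.MinimalDominating D ∧ D.ncard = n} :=
  ⟨Nat.card V, by rintro _ ⟨D, -, rfl⟩; exact Set.ncard_le_card D⟩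

lemma MinimalDominating.ncard_le_upperDomNum [Finite V] {D : Set V}
    (hD : G.MinimalDominating D) : D.ncard ≤ G.upperDomNum :=
  le_csSup G.upperDomNum_bddAbove ⟨D, hD, rfl⟩

lemma exists_minimalDominating_ncard_eq_upperDomNum [Finite V] (G : SimpleGraph V) :
    ∃ D, G.MinimalDominating D ∧ D.ncard = G.upperDomNum := by
  obtain ⟨D, hD⟩ := G.exists_minimalDominating
  exact Nat.sSup_mem (s := {n | ∃ D : Set V, G.MinimalDominating D ∧ D.ncard = n})
    ⟨_, D, hD, rfl⟩ G.upperDomNum_bddAbove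

def isolatedIn (G : SimpleGraph V) (D : Set V) : Set V :=
  {u ∈ D | ∀ w ∈ D, ¬G.Adj w u}

lemma Dominating.exists_adj_of_notMem_isolatedIn {D : Set V} (hD : G.Dominating D) {x : V}
    (hx : x ∉ G.isolatedIn D) : ∃ c ∈ D, G.Adj c x := by
  by_cases hxD : x ∈ D
  · by_contra! h
    exact hx ⟨hxD, h⟩
  · obtain ⟨c, hc, rfl | hcx⟩ := hD x
    · exact absurd hc hxD
    · exact ⟨c, hc, hcx⟩

lemma isPrivateNeighbor_self_of_mem_isolatedIn {D : Set V} {u : V} (hu : u ∈ G.isolatedIn D) :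
    G.IsPrivateNeighbor D u u :=
  ⟨Or.inl rfl, fun w hw hwu => hwu.resolve_right (hu.2 w hw)⟩

lemma MinimalDominating.exists_isPrivateNeighbor_notMem {D : Set V}
    (hD : G.MinimalDominating D) {u : V} (hu : u ∈ D) (hA : u ∉ G.isolatedIn D) :
    ∃ q ∉ D, G.IsPrivateNeighbor D u q := by
  have hnd : ¬G.Dominating (D \ {u}) := fun h =>
    ((Set.ext_iff.1 (hD.2 _ Set.sdiff_subset h) u).2 hu).2 rfl
  obtain ⟨q, hq⟩ : ∃ q, ∀ w ∈ D \ {u}, ¬(w = q ∨ G.Adj w q) := by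
    simpa [Dominating] using hnd
  have hpriv : ∀ w ∈ D, (w = q ∨ G.Adj w q) → w = u := fun w hw hwq => by
    by_contra hwu
    exact hq w ⟨hw, hwu⟩ hwq
  obtain ⟨w, hw, hwq⟩ := hD.1 q
  have hqD : q ∉ D := fun hqD => by
    obtain ⟨c, hc, hcu⟩ := hD.1.exists_adj_of_notMem_isolatedIn hA
    have hqu : q = u := hpriv q hqD (Or.inl rfl)
    exact hcu.ne (hpriv c hc (Or.inr (hqu ▸ hcu)))
  exact ⟨q, hqD, hpriv w hw hwq ▸ hwq, hpriv⟩

def IsPrivateNeighborFun (G : SimpleGraph V) (D : Set V) (π : V → V) : Prop :=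
  ∀ u ∈ D, G.IsPrivateNeighbor D u (π u) ∧ (u ∈ G.isolatedIn D ↔ π u = u)

lemma MinimalDominating.exists_isPrivateNeighborFun {D : Set V} (hD : G.MinimalDominating D) :
    ∃ π, G.IsPrivateNeighborFun D π := by
  have h : ∀ u, ∃ q, u ∈ D → G.IsPrivateNeighbor D u q ∧ (u ∈ G.isolatedIn D ↔ q = u) := by
    intro u
    by_cases hA : u ∈ G.isolatedIn D
    · exact ⟨u, fun _ => ⟨isPrivateNeighbor_self_of_mem_isolatedIn hA, iff_of_true hA rfl⟩⟩
    by_cases hu : u ∈ D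
    · obtain ⟨q, hqD, hq⟩ := hD.exists_isPrivateNeighbor_notMem hu hA
      exact ⟨q, fun _ => ⟨hq, iff_of_false hA fun h => hqD (h ▸ hu)⟩⟩
    · exact ⟨u, fun h => absurd h hu⟩
  choose π hπ using h
  exact ⟨π, hπ⟩

namespace IsPrivateNeighborFun

variable {D : Set V} {π : V → V}

lemma apply_eq_self (hπ : G.IsPrivateNeighborFun D π) {u : V} (hu : u ∈ G.isolatedIn D) :
    π u = u :=
  ((hπ u hu.1).2).1 hu

lemma adj (hπ : G.IsPrivateNeighborFun D π) {u : V} (hu : u ∈ D) (hA : u ∉ G.isolatedIn D) :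
    G.Adj u (π u) :=
  (hπ u hu).1.1.resolve_left fun h => hA (((hπ u hu).2).2 h.symm)

lemma notMem (hπ : G.IsPrivateNeighborFun D π) {u : V} (hu : u ∈ D)
    (hA : u ∉ G.isolatedIn D) : π u ∉ D := fun h =>
  hA (((hπ u hu).2).2 ((hπ u hu).1.2 _ h (Or.inl rfl)))

lemma eq_of_adj (hπ : G.IsPrivateNeighborFun D π) {u c : V} (hu : u ∈ D) (hc : c ∈ D)
    (hadj : G.Adj c (π u)) : c = u ∧ u ∉ G.isolatedIn D := by
  obtain rfl := (hπ u hu).1.2 c hc (Or.inr hadj)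
  exact ⟨rfl, fun hA => hadj.ne (hπ.apply_eq_self hA).symm⟩

end IsPrivateNeighborFun

variable (G H) in
def tensorDomSet (D₁ : Set V) (D₂ : Set W) : Set (V × W) :=
  G.isolatedIn D₁ ×ˢ Set.univ ∪ D₁ ×ˢ D₂ ∪ Set.univ ×ˢ H.isolatedIn D₂

lemma dominating_tensorDomSet {D₁ : Set V} {D₂ : Set W} (hD₁ : G.Dominating D₁)
    (hD₂ : H.Dominating D₂) : (G.tensor H).Dominating (tensorDomSet G H D₁ D₂) := by
  rintro ⟨x, y⟩
  by_cases hx : x ∈ G.isolatedIn D₁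
  · exact ⟨(x, y), Or.inl (Or.inl ⟨hx, trivial⟩), Or.inl rfl⟩
  by_cases hy : y ∈ H.isolatedIn D₂
  · exact ⟨(x, y), Or.inr ⟨trivial, hy⟩, Or.inl rfl⟩
  obtain ⟨c, hc, hcx⟩ := hD₁.exists_adj_of_notMem_isolatedIn hx
  obtain ⟨d, hd, hdy⟩ := hD₂.exists_adj_of_notMem_isolatedIn hy
  exact ⟨(c, d), Or.inl (Or.inr ⟨hc, hd⟩), Or.inr ⟨hcx, hdy⟩⟩

lemma fst_mem_or_snd_mem_of_mem_tensorDomSet {D₁ : Set V} {D₂ : Set W} {e : V × W}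
    (he : e ∈ tensorDomSet G H D₁ D₂) : e.1 ∈ D₁ ∨ e.2 ∈ D₂ := by
  rcases he with (⟨h, -⟩ | ⟨h, -⟩) | ⟨-, h⟩
  · exact Or.inl h.1
  · exact Or.inl h
  · exact Or.inr h.1

open Classical in
variable (G H) in
noncomputable def tensorRepr (D₁ : Set V) (D₂ : Set W) (π₁ : V → V) (π₂ : W → W)
    (e : V × W) : V × W :=
  if e.1 ∈ G.isolatedIn D₁ ∨ e.2 ∈ H.isolatedIn D₂ then (π₁ e.1, π₂ e.2) else e

section tensorRepr

variable {D₁ : Set V} {D₂ : Set W} {π₁ : V → V} {π₂ : W → W} {u : V} {v : W}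

lemma tensorRepr_of_or (h : u ∈ G.isolatedIn D₁ ∨ v ∈ H.isolatedIn D₂) :
    tensorRepr G H D₁ D₂ π₁ π₂ (u, v) = (π₁ u, π₂ v) :=
  if_pos h

lemma tensorRepr_of_not_or (h : ¬(u ∈ G.isolatedIn D₁ ∨ v ∈ H.isolatedIn D₂)) :
    tensorRepr G H D₁ D₂ π₁ π₂ (u, v) = (u, v) :=
  if_neg h

lemma tensorRepr_mem_tensorDomSet (hπ₁ : G.IsPrivateNeighborFun D₁ π₁)
    (hπ₂ : H.IsPrivateNeighborFun D₂ π₂) (hu : u ∈ D₁) (hv : v ∈ D₂) :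
    tensorRepr G H D₁ D₂ π₁ π₂ (u, v) ∈ tensorDomSet G H D₁ D₂ := by
  by_cases h : u ∈ G.isolatedIn D₁ ∨ v ∈ H.isolatedIn D₂
  · rw [tensorRepr_of_or h]
    rcases h with h | h
    · exact Or.inl (Or.inl ⟨(hπ₁.apply_eq_self h).symm ▸ h, trivial⟩)
    · exact Or.inr ⟨trivial, (hπ₂.apply_eq_self h).symm ▸ h⟩
  · rw [tensorRepr_of_not_or h]
    exact Or.inl (Or.inr ⟨hu, hv⟩)

lemma isPrivateNeighbor_tensorRepr (hπ₁ : G.IsPrivateNeighborFun D₁ π₁)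
    (hπ₂ : H.IsPrivateNeighborFun D₂ π₂) (hu : u ∈ D₁) (hv : v ∈ D₂) :
    (G.tensor H).IsPrivateNeighbor (tensorDomSet G H D₁ D₂)
      (tensorRepr G H D₁ D₂ π₁ π₂ (u, v)) (π₁ u, π₂ v) := by
  have hadj : ∀ e ∈ tensorDomSet G H D₁ D₂, (G.tensor H).Adj e (π₁ u, π₂ v) →
      e = (u, v) ∧ u ∉ G.isolatedIn D₁ ∧ v ∉ H.isolatedIn D₂ := by
    rintro ⟨c, d⟩ he ⟨hc, hd⟩
    rcases he with (⟨hcA, -⟩ | ⟨hcD, hdD⟩) | ⟨-, hdA⟩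
    · obtain ⟨rfl, hA⟩ := hπ₁.eq_of_adj hu hcA.1 hc
      exact absurd hcA hA
    · obtain ⟨rfl, hA₁⟩ := hπ₁.eq_of_adj hu hcD hc
      obtain ⟨rfl, hA₂⟩ := hπ₂.eq_of_adj hv hdD hd
      exact ⟨rfl, hA₁, hA₂⟩
    · obtain ⟨rfl, hA⟩ := hπ₂.eq_of_adj hv hdA.1 hd
      exact absurd hdA hA
  by_cases h : u ∈ G.isolatedIn D₁ ∨ v ∈ H.isolatedIn D₂
  · rw [tensorRepr_of_or h]
    refine ⟨Or.inl rfl, fun e he hq => hq.elim id fun ha => ?_⟩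
    obtain ⟨-, hA₁, hA₂⟩ := hadj e he ha
    exact absurd h (not_or.2 ⟨hA₁, hA₂⟩)
  · rw [tensorRepr_of_not_or h]
    rw [not_or] at h
    refine ⟨Or.inr ⟨hπ₁.adj hu h.1, hπ₂.adj hv h.2⟩,
      fun e he hq => hq.elim ?_ (hadj e he · |>.1)⟩
    rintro rfl
    exact (fst_mem_or_snd_mem_of_mem_tensorDomSet he).elim
      (absurd · (hπ₁.notMem hu h.1)) (absurd · (hπ₂.notMem hv h.2))

lemma injOn_tensorRepr (hπ₁ : G.IsPrivateNeighborFun D₁ π₁)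
    (hπ₂ : H.IsPrivateNeighborFun D₂ π₂) :
    Set.InjOn (tensorRepr G H D₁ D₂ π₁ π₂) (D₁ ×ˢ D₂) := by
  have hcoord : ∀ u v, ((tensorRepr G H D₁ D₂ π₁ π₂ (u, v)).1 = u ∨
      (tensorRepr G H D₁ D₂ π₁ π₂ (u, v)).1 = π₁ u) ∧
      ((tensorRepr G H D₁ D₂ π₁ π₂ (u, v)).2 = v ∨
      (tensorRepr G H D₁ D₂ π₁ π₂ (u, v)).2 = π₂ v) := by
    intro u v
    by_cases h : u ∈ G.isolatedIn D₁ ∨ v ∈ H.isolatedIn D₂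
    · simp [tensorRepr_of_or h]
    · simp [tensorRepr_of_not_or h]
  rintro ⟨u, v⟩ ⟨hu, hv⟩ ⟨u', v'⟩ ⟨hu', hv'⟩ h
  obtain ⟨h₁, h₂⟩ := Prod.ext_iff.1 h
  obtain ⟨hx, hy⟩ := hcoord u v
  obtain ⟨hx', hy'⟩ := hcoord u' v'
  rw [h₁] at hx
  rw [h₂] at hy
  exact Prod.ext ((hπ₁ u hu).1.eq_of_eq_or_eq (hπ₁ u' hu').1 hu hu' hx hx')
    ((hπ₂ v hv).1.eq_of_eq_or_eq (hπ₂ v' hv').1 hv hv' hy hy')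

end tensorRepr

theorem MinimalDominating.exists_tensor_le_ncard [Finite V] [Finite W] {D₁ : Set V}
    {D₂ : Set W} (hD₁ : G.MinimalDominating D₁) (hD₂ : H.MinimalDominating D₂) :
    ∃ D, (G.tensor H).MinimalDominating D ∧ D₁.ncard * D₂.ncard ≤ D.ncard := by
  obtain ⟨π₁, hπ₁⟩ := hD₁.exists_isPrivateNeighborFun
  obtain ⟨π₂, hπ₂⟩ := hD₂.exists_isPrivateNeighborFun
  set f := tensorRepr G H D₁ D₂ π₁ π₂
  obtain ⟨D, hD, hfD⟩ :=
    (dominating_tensorDomSet hD₁.1 hD₂.1).exists_minimalDominating_superset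
      (I := f '' (D₁ ×ˢ D₂))
      (Set.image_subset_iff.2 fun _ he => tensorRepr_mem_tensorDomSet hπ₁ hπ₂ he.1 he.2)
      (by
        rintro _ ⟨⟨u, v⟩, ⟨hu, hv⟩, rfl⟩
        exact ⟨_, isPrivateNeighbor_tensorRepr hπ₁ hπ₂ hu hv⟩)
  refine ⟨D, hD, ?_⟩
  calc D₁.ncard * D₂.ncard = (D₁ ×ˢ D₂).ncard := Set.ncard_prod.symm
    _ = (f '' (D₁ ×ˢ D₂)).ncard := (injOn_tensorRepr hπ₁ hπ₂).ncard_image.symm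
    _ ≤ D.ncard := Set.ncard_le_ncard hfD

end SimpleGraph

theorem stmt15_general {V W : Type*} [Fintype V] [Fintype W] (G : SimpleGraph V) (H : SimpleGraph W) :
    G.upperDomNum * H.upperDomNum ≤ (G.tensor H).upperDomNum := by
  obtain ⟨D₁, hD₁, hc₁⟩ := G.exists_minimalDominating_ncard_eq_upperDomNum
  obtain ⟨D₂, hD₂, hc₂⟩ := H.exists_minimalDominating_ncard_eq_upperDomNum
  obtain ⟨D, hD, hle⟩ := hD₁.exists_tensor_le_ncard hD₂
  rw [← hc₁, ← hc₂]
  exact hle.trans hD.ncard_le_upperDomNum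

theorem stmt15 {V W : Type*} [Fintype V] [Fintype W] (G : SimpleGraph V) (H : SimpleGraph W)
    (hG : G.NoIsolated) (hH : H.NoIsolated) :
    G.upperDomNum * H.upperDomNum ≤ (G.tensor H).upperDomNum :=
  stmt15_general G H
end

section
/- For every n ≥ 2, the upper domination number of the 2 × n rook graph G_n = K_2 □ K_n equals n. -/
set_option linter.unusedVariables false
set_option linter.unnecessarySeqFocus false

open SimpleGraph

variable {V : Type*} {W : Type*}

/-!
In `K₂ □ K_α`, a vertex dominates exactly its row and its column. Hence one vertex from each row
already dominates everything, so a minimal dominating set meeting both rows is such a pair; any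
other minimal dominating set lies in one row and has at most `|α|` elements. A whole row is a
minimal dominating set: deleting `(a, x)` leaves `(b, x)` in the other row undominated.
-/

namespace SimpleGraph

variable {α β : Type*}

theorem top_boxProd_top_eq_or_adj_iff {p q : β × α} :
    p = q ∨ ((⊤ : SimpleGraph β) □ (⊤ : SimpleGraph α)).Adj p q ↔ p.1 = q.1 ∨ p.2 = q.2 := by
  rw [boxProd_adj, top_adj, top_adj, Prod.ext_iff]
  tauto

theorem minimalDominating_top_boxProd_top_row [Nontrivial β] (a : β) :
    ((⊤ : SimpleGraph β) □ (⊤ : SimpleGraph α)).MinimalDominating {p | p.1 = a} := by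
  refine ⟨fun v => ⟨(a, v.2), rfl, top_boxProd_top_eq_or_adj_iff.2 (Or.inr rfl)⟩, ?_⟩
  intro D hD hdom
  refine hD.antisymm fun p (hp : p.1 = a) => ?_
  obtain ⟨b, hba⟩ := exists_ne a
  obtain ⟨u, hu, hup⟩ := hdom (b, p.2)
  have hua : u.1 = a := hD hu
  rcases top_boxProd_top_eq_or_adj_iff.1 hup with hub | hcol
  · exact absurd (hub.symm.trans hua) hba
  · rwa [← Prod.ext (hua.trans hp.symm) hcol]

theorem ncard_row (a : β) : {p : β × α | p.1 = a}.ncard = Nat.card α := by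
  have hrow : {p : β × α | p.1 = a} = {a} ×ˢ Set.univ := by
    ext p
    simp
  simp [hrow, Set.ncard_prod]

theorem MinimalDominating.ncard_le_max_two [Finite α] {D : Set (Fin 2 × α)}
    (hD : ((⊤ : SimpleGraph (Fin 2)) □ (⊤ : SimpleGraph α)).MinimalDominating D) :
    D.ncard ≤ max 2 (Nat.card α) := by
  by_cases hrows : ∃ u ∈ D, ∃ w ∈ D, u.1 ≠ w.1
  · obtain ⟨u, hu, w, hw, huw⟩ := hrows
    have hpair : (⊤ □ ⊤ : SimpleGraph (Fin 2 × α)).Dominating {u, w} := by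
      intro v
      rcases (by omega : u.1 = v.1 ∨ w.1 = v.1) with hrow | hrow
      · exact ⟨u, by simp, top_boxProd_top_eq_or_adj_iff.2 (Or.inl hrow)⟩
      · exact ⟨w, by simp, top_boxProd_top_eq_or_adj_iff.2 (Or.inl hrow)⟩
    rw [← hD.2 {u, w} (Set.insert_subset hu (Set.singleton_subset_iff.2 hw)) hpair]
    exact (Set.ncard_insert_le u {w}).trans (by simp)
  · push Not at hrows
    have hinj : Set.InjOn Prod.snd D := fun p hp q hq hcol => Prod.ext (hrows p hp q hq) hcol
    calc D.ncard ≤ (Set.univ : Set α).ncard :=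
          Set.ncard_le_ncard_of_injOn Prod.snd (fun _ _ => Set.mem_univ _) hinj
      _ ≤ max 2 (Nat.card α) := by simp

theorem upperDomNum_top_boxProd_top [Finite α] (hα : 2 ≤ Nat.card α) :
    ((⊤ : SimpleGraph (Fin 2)) □ (⊤ : SimpleGraph α)).upperDomNum = Nat.card α := by
  refine IsGreatest.csSup_eq ⟨⟨_, minimalDominating_top_boxProd_top_row 0, ncard_row 0⟩, ?_⟩
  rintro _ ⟨D, hD, rfl⟩
  exact hD.ncard_le_max_two.trans (max_le hα le_rfl)

end SimpleGraph

theorem stmt16 (n : ℕ) (hn : 2 ≤ n) :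
    ((⊤ : SimpleGraph (Fin 2)) □ (⊤ : SimpleGraph (Fin n))).upperDomNum = n := by
  simpa using upperDomNum_top_boxProd_top (α := Fin n) (by simpa using hn)
end

section
/- Every minimal total dominating set of the 2 × n rook graph K_2 □ K_n (n ≥ 3) has size 2, 4, or n. -/
set_option linter.unusedVariables false
set_option linter.unnecessarySeqFocus false

open SimpleGraph

variable {V : Type*} {W : Type*}

/-!
Write `D` row by row. If two points of `D` share a column, that column is already totally
dominating, so by minimality it is all of `D`. Otherwise no vertex of `D` is dominated within its
column, so every nonempty row of `D` has at least two points. An empty row forces every vertex of it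
to be dominated from its column, and `D` then meets each column exactly once: `|D| = n`. If no row is
empty, any choice of two points in each row is totally dominating, so by minimality `D` consists of
exactly two points in each of the two rows: `|D| = 4`.
-/

namespace SimpleGraph

open Set

variable {α β : Type*}

abbrev rookGraph (α β : Type*) : SimpleGraph (α × β) := (⊤ : SimpleGraph α) □ (⊤ : SimpleGraph β)

@[simp]
theorem rookGraph_adj {x y : α × β} :
    (rookGraph α β).Adj x y ↔ x.1 ≠ y.1 ∧ x.2 = y.2 ∨ x.2 ≠ y.2 ∧ x.1 = y.1 := by
  simp [boxProd_adj]

theorem rookGraph_totalDominating_univ_prod_singleton [Nontrivial α] (c : β) :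
    (rookGraph α β).TotalDominating (univ ×ˢ {c}) := by
  rintro ⟨a, b⟩
  by_cases hb : b = c
  · obtain ⟨a', ha'⟩ := exists_ne a
    exact ⟨(a', c), by simp, by simp [ha', hb]⟩
  · exact ⟨(a, c), by simp, by simp [Ne.symm hb]⟩

theorem rookGraph_totalDominating_of_forall_nontrivial {D : Set (α × β)}
    (h : ∀ a, (Prod.mk a ⁻¹' D).Nontrivial) : (rookGraph α β).TotalDominating D := by
  rintro ⟨a, b⟩
  obtain ⟨b', hb', hne⟩ := (h a).exists_ne b
  exact ⟨(a, b'), hb', by simp [hne]⟩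

namespace TotalDominating

variable {D : Set (α × β)}

theorem nontrivial_row_of_injOn_snd (hD : (rookGraph α β).TotalDominating D)
    (hinj : InjOn Prod.snd D) {a : α} (ha : (Prod.mk a ⁻¹' D).Nonempty) :
    (Prod.mk a ⁻¹' D).Nontrivial := by
  obtain ⟨b, hb⟩ := ha
  obtain ⟨⟨a', b'⟩, hu, hadj⟩ := hD (a, b)
  rcases rookGraph_adj.1 hadj with ⟨ha', rfl⟩ | ⟨hb', rfl⟩
  · exact absurd (hinj hu hb rfl) (by simpa using ha')
  · exact ⟨b', hu, b, hb, hb'⟩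

theorem image_snd_eq_univ (hD : (rookGraph α β).TotalDominating D) {a : α}
    (ha : Prod.mk a ⁻¹' D = ∅) : Prod.snd '' D = univ := by
  refine eq_univ_of_forall fun b => ?_
  obtain ⟨⟨a', b'⟩, hu, hadj⟩ := hD (a, b)
  rcases rookGraph_adj.1 hadj with ⟨-, rfl⟩ | ⟨-, rfl⟩
  · exact ⟨_, hu, rfl⟩
  · exact absurd hu (eq_empty_iff_forall_notMem.1 ha b')

theorem ncard_eq_card_of_injOn_snd (hD : (rookGraph α β).TotalDominating D)
    (hinj : InjOn Prod.snd D) {a : α} (ha : Prod.mk a ⁻¹' D = ∅) : D.ncard = Nat.card β := by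
  rw [← hinj.ncard_image, hD.image_snd_eq_univ ha, ncard_univ]

end TotalDominating

theorem ncard_range_union_range_eq [Finite α] {x y : α → β} (hxy : ∀ a, x a ≠ y a) :
    (range (fun a => (a, x a)) ∪ range (fun a => (a, y a))).ncard = 2 * Nat.card α := by
  have hinj : ∀ f : α → β, Function.Injective fun a => (a, f a) :=
    fun f _ _ h => (Prod.ext_iff.1 h).1
  rw [ncard_union_eq, ncard_range_of_injective (hinj x), ncard_range_of_injective (hinj y)]
  · ring
  · rw [Set.disjoint_left]
    rintro _ ⟨a, rfl⟩ ⟨a', h⟩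
    obtain ⟨rfl, h⟩ := Prod.ext_iff.1 h
    exact hxy _ h.symm

theorem eq_range_union_range_of_minimal {D : Set (α × β)}
    (hmin : ∀ D' ⊆ D, (rookGraph α β).TotalDominating D' → D' = D)
    (hrows : ∀ a, (Prod.mk a ⁻¹' D).Nontrivial) :
    ∃ x y : α → β, (∀ a, x a ≠ y a) ∧
      D = range (fun a => (a, x a)) ∪ range (fun a => (a, y a)) := by
  choose x hx y hy hxy using hrows
  refine ⟨x, y, hxy, (hmin _ ?_ ?_).symm⟩
  · rintro _ (⟨a, rfl⟩ | ⟨a, rfl⟩)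
    exacts [hx a, hy a]
  · refine rookGraph_totalDominating_of_forall_nontrivial fun a => ?_
    refine ⟨x a, ?_, y a, ?_, hxy a⟩ <;> simp

theorem ncard_eq_two_of_not_injOn_snd {D : Set (Fin 2 × β)}
    (hmin : ∀ D' ⊆ D, (rookGraph (Fin 2) β).TotalDominating D' → D' = D)
    (hinj : ¬InjOn Prod.snd D) : D.ncard = 2 := by
  obtain ⟨p, hp, q, hq, hpq, hne⟩ : ∃ p ∈ D, ∃ q ∈ D, p.2 = q.2 ∧ p ≠ q := by
    simpa only [InjOn, not_forall, exists_prop] using hinj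
  have hcol : univ ×ˢ {p.2} ⊆ D := by
    rintro ⟨a, b⟩ ⟨-, rfl : b = p.2⟩
    have hne₁ : p.1 ≠ q.1 := fun h => hne (Prod.ext h hpq)
    rcases (by omega : a = p.1 ∨ a = q.1) with rfl | rfl
    · exact hp
    · rwa [hpq]
  rw [← hmin _ hcol (rookGraph_totalDominating_univ_prod_singleton _), ncard_prod]
  simp

end SimpleGraph

theorem stmt18_general (n : ℕ) (D : Set (Fin 2 × Fin n))
    (htd : ((⊤ : SimpleGraph (Fin 2)) □ (⊤ : SimpleGraph (Fin n))).TotalDominating D)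
    (hmin : ∀ D' ⊆ D,
      ((⊤ : SimpleGraph (Fin 2)) □ (⊤ : SimpleGraph (Fin n))).TotalDominating D' → D' = D) :
    D.ncard = 2 ∨ D.ncard = 4 ∨ D.ncard = n := by
  by_cases hinj : Set.InjOn Prod.snd D
  · by_cases hrows : ∀ a, (Prod.mk a ⁻¹' D).Nonempty
    · obtain ⟨x, y, hxy, rfl⟩ := eq_range_union_range_of_minimal hmin fun a =>
        htd.nontrivial_row_of_injOn_snd hinj (hrows a)
      right; left
      simpa using ncard_range_union_range_eq hxy
    · obtain ⟨a, ha⟩ : ∃ a : Fin 2, Prod.mk a ⁻¹' D = ∅ := by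
        simpa only [not_forall, Set.not_nonempty_iff_eq_empty] using hrows
      right; right
      simpa using htd.ncard_eq_card_of_injOn_snd hinj ha
  · exact Or.inl (ncard_eq_two_of_not_injOn_snd hmin hinj)

theorem stmt18 (n : ℕ) (hn : 3 ≤ n) (D : Set (Fin 2 × Fin n))
    (htd : ((⊤ : SimpleGraph (Fin 2)) □ (⊤ : SimpleGraph (Fin n))).TotalDominating D)
    (hmin : ∀ D' ⊆ D,
      ((⊤ : SimpleGraph (Fin 2)) □ (⊤ : SimpleGraph (Fin n))).TotalDominating D' → D' = D) :
    D.ncard = 2 ∨ D.ncard = 4 ∨ D.ncard = n :=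
  stmt18_general n D htd hmin
end
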